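/- Let G be a λ-one-sided expander: a connected regular graph whose normalized adjacency operator A satisfies ⟨f, Af⟩ ≤ (1−λ)(E f)² + λ E f² for all f. Let χ be a proper k-coloring with indicator functions χ_a, and for colors a ≠ b let ψ_a(x) = Pr[χ(y) = a | x] (fraction of neighbors of x colored a) and α = E[ψ_a | χ(x) = b]. Then the conditional variance satisfies E[χ_b · (ψ_a − α)²] ≤ λ · E[χ_a] · ((1−λ) E[χ_a] + λ) ≤ λ E[χ_a]. -/

import Mathlib

open Matrix Finset
open scoped Classical

/-!
Write `e = χ_a` and `g = χ_b (ψ_a - α)`, and test the expansion hypothesis on `f = g + s e`.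
Since `α` is the mean of `ψ_a` on the colour class `b`, `E f = s E e`; since `a ≠ b` and
`e² = e`, `E f² = E g² + s² E e`. Colour classes are independent sets, so `⟨g, A g⟩` and
`⟨e, A e⟩` vanish and `⟨f, A f⟩ = 2 s ⟨g, A e⟩ = 2 s E g²`. The resulting inequality,
valid for every `s`, gives the bound at `s = λ` (and forces `E g² = 0` when `λ = 0`).
-/

namespace Finset

variable {ι : Type*}

theorem sum_sub_average_eq_zero (s : Finset ι) (f : ι → ℝ) :
    ∑ x ∈ s, (f x - (#s : ℝ)⁻¹ * ∑ y ∈ s, f y) = 0 := by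
  rcases s.eq_empty_or_nonempty with rfl | hs
  · simp
  · rw [sum_sub_distrib, sum_const, nsmul_eq_mul, ← mul_assoc,
      mul_inv_cancel₀ (by positivity), one_mul, sub_self]

variable [DecidableEq ι]

noncomputable def centeredOn (s : Finset ι) (f : ι → ℝ) : ι → ℝ :=
  fun x => if x ∈ s then f x - (#s : ℝ)⁻¹ * ∑ y ∈ s, f y else 0

theorem centeredOn_of_notMem {s : Finset ι} {x : ι} (hx : x ∉ s) (f : ι → ℝ) :
    s.centeredOn f x = 0 :=
  if_neg hx

variable [Fintype ι] (s : Finset ι) (f : ι → ℝ)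

theorem sum_centeredOn : ∑ x, s.centeredOn f x = 0 := by
  simp only [centeredOn, sum_ite_mem_eq]
  exact sum_sub_average_eq_zero s f

theorem sum_centeredOn_sq :
    ∑ x, s.centeredOn f x ^ 2 = ∑ x ∈ s, (f x - (#s : ℝ)⁻¹ * ∑ y ∈ s, f y) ^ 2 := by
  simp only [centeredOn, ite_pow, zero_pow two_ne_zero, sum_ite_mem_eq]

theorem centeredOn_dotProduct :
    s.centeredOn f ⬝ᵥ f = ∑ x ∈ s, (f x - (#s : ℝ)⁻¹ * ∑ y ∈ s, f y) ^ 2 := by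
  set α := (#s : ℝ)⁻¹ * ∑ y ∈ s, f y
  have hmean := sum_sub_average_eq_zero s f
  calc s.centeredOn f ⬝ᵥ f = ∑ x ∈ s, ((f x - α) ^ 2 + α * (f x - α)) := by
        simp only [dotProduct, centeredOn, ite_mul, zero_mul, sum_ite_mem_eq]
        exact sum_congr rfl fun x _ => by ring
    _ = ∑ x ∈ s, (f x - α) ^ 2 := by rw [sum_add_distrib, ← mul_sum, hmean, mul_zero, add_zero]

end Finset

namespace Matrix

variable {V R : Type*} [Fintype V] [CommRing R] {M : Matrix V V R}

theorem IsSymm.dotProduct_mulVec_comm (hM : M.IsSymm) (u v : V → R) :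
    u ⬝ᵥ M *ᵥ v = v ⬝ᵥ M *ᵥ u := by
  rw [dotProduct_mulVec, ← mulVec_transpose, hM.eq, dotProduct_comm]

theorem IsSymm.dotProduct_mulVec_add_smul (hM : M.IsSymm) (u v : V → R) (s : R) :
    (u + s • v) ⬝ᵥ M *ᵥ (u + s • v) =
      u ⬝ᵥ M *ᵥ u + 2 * s * (u ⬝ᵥ M *ᵥ v) + s ^ 2 * (v ⬝ᵥ M *ᵥ v) := by
  simp only [mulVec_add, mulVec_smul, add_dotProduct, dotProduct_add, smul_dotProduct,
    dotProduct_smul, smul_eq_mul, hM.dotProduct_mulVec_comm v u]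
  ring

end Matrix

namespace SimpleGraph

variable {V : Type*} {G : SimpleGraph V}

theorem isIndepSet_setOf_eq {ι : Type*} {χ : V → ι} (hχ : ∀ x y, G.Adj x y → χ x ≠ χ y)
    (a : ι) : G.IsIndepSet {x | χ x = a} :=
  fun x hx y hy _ hxy => hχ x y hxy (hx.trans hy.symm)

variable {R : Type*} [Fintype V] [CommRing R] [DecidableRel G.Adj]

theorem dotProduct_smul_adjMatrix_mulVec_eq_zero {s : Set V} (hs : G.IsIndepSet s)
    {u v : V → R} (hu : ∀ x ∉ s, u x = 0) (hv : ∀ x ∉ s, v x = 0) (c : R) :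
    u ⬝ᵥ (c • G.adjMatrix R) *ᵥ v = 0 := by
  suffices h : ∑ x, ∑ y, (if G.Adj x y then u x * v y else 0) = 0 by
    rw [smul_mulVec, dotProduct_smul, dotProduct_mulVec_adjMatrix, h, smul_zero]
  refine sum_eq_zero fun x _ => sum_eq_zero fun y _ => ?_
  split_ifs with hxy
  · by_cases hx : x ∈ s
    · rw [hv y fun hy => hs hx hy hxy.ne hxy, mul_zero]
    · rw [hu x hx, zero_mul]
  · rfl

end SimpleGraph

theorem two_mul_le_of_expansion {V : Type*} [Fintype V] {A : Matrix V V ℝ} (hA : A.IsSymm)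
    {lam : ℝ}
    (hexp : ∀ f : V → ℝ, (1 / (Fintype.card V : ℝ)) * (f ⬝ᵥ A *ᵥ f) ≤
      (1 - lam) * ((1 / (Fintype.card V : ℝ)) * ∑ x, f x) ^ 2 +
        lam * ((1 / (Fintype.card V : ℝ)) * ∑ x, f x ^ 2))
    {g e : V → ℝ} (hg : ∑ x, g x = 0) (hge : ∀ x, g x * e x = 0) (he : ∀ x, e x ^ 2 = e x)
    (hgg : g ⬝ᵥ A *ᵥ g = 0) (hee : e ⬝ᵥ A *ᵥ e = 0) (s : ℝ) :
    2 * s * ((1 / (Fintype.card V : ℝ)) * (g ⬝ᵥ A *ᵥ e)) ≤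
      (1 - lam) * (s * ((1 / (Fintype.card V : ℝ)) * ∑ x, e x)) ^ 2 +
        lam * ((1 / (Fintype.card V : ℝ)) * ∑ x, g x ^ 2 +
          s ^ 2 * ((1 / (Fintype.card V : ℝ)) * ∑ x, e x)) := by
  have hsum : ∑ x, (g + s • e) x = s * ∑ x, e x := by
    simp only [Pi.add_apply, Pi.smul_apply, smul_eq_mul, sum_add_distrib, ← mul_sum, hg,
      zero_add]
  have hsq : ∑ x, (g + s • e) x ^ 2 = ∑ x, g x ^ 2 + s ^ 2 * ∑ x, e x := by
    rw [mul_sum, ← sum_add_distrib]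
    refine sum_congr rfl fun x _ => ?_
    simp only [Pi.add_apply, Pi.smul_apply, smul_eq_mul]
    linear_combination (2 * s) * hge x + s ^ 2 * he x
  have h := hexp (g + s • e)
  rw [hA.dotProduct_mulVec_add_smul, hgg, hee, hsum, hsq] at h
  convert h using 1 <;> ring

theorem le_of_forall_two_mul_le {v μ lam : ℝ} (hlam : 0 ≤ lam) (hμ : μ ^ 2 ≤ 1)
    (h : ∀ s, 2 * s * v ≤ (1 - lam) * (s * μ) ^ 2 + lam * (v + s ^ 2 * μ)) :
    v ≤ lam * μ * ((1 - lam) * μ + lam) := by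
  rcases hlam.eq_or_lt with rfl | hpos
  · nlinarith [h v, sq_nonneg v]
  · refine le_of_mul_le_mul_left ?_ hpos
    nlinarith [h lam]

theorem stmt17_general {n k d : ℕ} (G : SimpleGraph (Fin n)) [DecidableRel G.Adj]
    (lam : ℝ) (hlam0 : 0 ≤ lam) (hlam1 : lam ≤ 1)
    (hexp : ∀ f : Fin n → ℝ,
      (1 / (n : ℝ)) * ∑ x, f x * (((d : ℝ)⁻¹ • G.adjMatrix ℝ).mulVec f) x ≤
        (1 - lam) * ((1 / (n : ℝ)) * ∑ x, f x) ^ 2 +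
          lam * ((1 / (n : ℝ)) * ∑ x, (f x) ^ 2))
    (χ : Fin n → Fin k) (hproper : ∀ x y, G.Adj x y → χ x ≠ χ y)
    (a b : Fin k) (hab : a ≠ b) :
    (1 / (n : ℝ)) * ∑ x ∈ Finset.univ.filter (fun x => χ x = b),
        ((((d : ℝ)⁻¹ • G.adjMatrix ℝ).mulVec
            (fun y => if χ y = a then (1 : ℝ) else 0)) x -
          (((Finset.univ.filter fun x => χ x = b).card : ℝ))⁻¹ *
            ∑ x' ∈ Finset.univ.filter (fun x => χ x = b),
              (((d : ℝ)⁻¹ • G.adjMatrix ℝ).mulVec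
                (fun y => if χ y = a then (1 : ℝ) else 0)) x') ^ 2
      ≤ lam * (((Finset.univ.filter fun x => χ x = a).card : ℝ) / n) *
          ((1 - lam) * (((Finset.univ.filter fun x => χ x = a).card : ℝ) / n) + lam) ∧
    lam * (((Finset.univ.filter fun x => χ x = a).card : ℝ) / n) *
        ((1 - lam) * (((Finset.univ.filter fun x => χ x = a).card : ℝ) / n) + lam)
      ≤ lam * (((Finset.univ.filter fun x => χ x = a).card : ℝ) / n) := by
  set A := (d : ℝ)⁻¹ • G.adjMatrix ℝ
  set e : Fin n → ℝ := fun y => if χ y = a then 1 else 0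
  set Sb := univ.filter fun x => χ x = b
  set g := Sb.centeredOn (A *ᵥ e)
  set μ := (#(univ.filter fun x => χ x = a) : ℝ) / n
  have hμ0 : 0 ≤ μ := by positivity
  have hμ1 : μ ≤ 1 := div_le_one_of_le₀
    (by exact_mod_cast (card_filter_le _ _).trans_eq (card_fin n)) n.cast_nonneg
  have hmean : 1 / (n : ℝ) * ∑ x, e x = μ := by
    simp only [e, μ, sum_boole, one_div_mul_eq_div]
  have he : ∀ x, χ x ≠ a → e x = 0 := fun x hx => if_neg hx
  have hg : ∀ x, χ x ≠ b → g x = 0 := fun x hx =>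
    centeredOn_of_notMem (by simpa [Sb] using hx) _
  have hge : ∀ x, g x * e x = 0 := fun x => by
    by_cases hx : χ x = a <;> simp [hx, he, hg x, hab]
  have he_sq : ∀ x, e x ^ 2 = e x := fun x => by by_cases hx : χ x = a <;> simp [e, hx]
  have hgg : g ⬝ᵥ A *ᵥ g = 0 := SimpleGraph.dotProduct_smul_adjMatrix_mulVec_eq_zero
    (SimpleGraph.isIndepSet_setOf_eq hproper b) hg hg _
  have hee : e ⬝ᵥ A *ᵥ e = 0 := SimpleGraph.dotProduct_smul_adjMatrix_mulVec_eq_zero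
    (SimpleGraph.isIndepSet_setOf_eq hproper a) he he _
  have key := two_mul_le_of_expansion (G.isSymm_adjMatrix.smul _)
    (by rw [Fintype.card_fin]; exact hexp) (sum_centeredOn Sb _) hge he_sq hgg hee
  rw [centeredOn_dotProduct, sum_centeredOn_sq, Fintype.card_fin, hmean] at key
  exact ⟨le_of_forall_two_mul_le hlam0 (pow_le_one₀ hμ0 hμ1) key,
    mul_le_of_le_one_right (by positivity) (by nlinarith)⟩

theorem stmt17 {n k d : ℕ} (G : SimpleGraph (Fin n)) [DecidableRel G.Adj]
    (hconn : G.Connected) (hreg : G.IsRegularOfDegree d) (hd : 0 < d)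
    (lam : ℝ) (hlam0 : 0 ≤ lam) (hlam1 : lam ≤ 1)
    (hexp : ∀ f : Fin n → ℝ,
      (1 / (n : ℝ)) * ∑ x, f x * (((d : ℝ)⁻¹ • G.adjMatrix ℝ).mulVec f) x ≤
        (1 - lam) * ((1 / (n : ℝ)) * ∑ x, f x) ^ 2 +
          lam * ((1 / (n : ℝ)) * ∑ x, (f x) ^ 2))
    (χ : Fin n → Fin k) (hproper : ∀ x y, G.Adj x y → χ x ≠ χ y)
    (a b : Fin k) (hab : a ≠ b) :
    (1 / (n : ℝ)) * ∑ x ∈ Finset.univ.filter (fun x => χ x = b),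
        ((((d : ℝ)⁻¹ • G.adjMatrix ℝ).mulVec
            (fun y => if χ y = a then (1 : ℝ) else 0)) x -
          (((Finset.univ.filter fun x => χ x = b).card : ℝ))⁻¹ *
            ∑ x' ∈ Finset.univ.filter (fun x => χ x = b),
              (((d : ℝ)⁻¹ • G.adjMatrix ℝ).mulVec
                (fun y => if χ y = a then (1 : ℝ) else 0)) x') ^ 2
      ≤ lam * (((Finset.univ.filter fun x => χ x = a).card : ℝ) / n) *
          ((1 - lam) * (((Finset.univ.filter fun x => χ x = a).card : ℝ) / n) + lam) ∧
    lam * (((Finset.univ.filter fun x => χ x = a).card : ℝ) / n) *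
        ((1 - lam) * (((Finset.univ.filter fun x => χ x = a).card : ℝ) / n) + lam)
      ≤ lam * (((Finset.univ.filter fun x => χ x = a).card : ℝ) / n) :=
  stmt17_general G lam hlam0 hlam1 hexp χ hproper a b hab
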